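/- Let f ∈ C^∞([0,∞); ℂⁿ) vanish near 0 (extended by 0 to ℝ), q ∈ L¹_loc([0,∞); Mₙ(ℂ)), and w₀(x,t) = −(1/2)∫_{(t−x)/2}^{(t+x)/2} q(s)ds. Then for every t ≥ 0 and a.e. x ∈ (0,t): ∫ₓᵗ w₀(x,s) f''(t−s) ds − ∂²/∂x² [∫ₓᵗ w₀(x,s) f(t−s) ds] = −q(x) f(t−x). -/

import Mathlib

open MeasureTheory Set

abbrev MatC (n : ℕ) := EuclideanSpace ℂ (Fin n) →L[ℂ] EuclideanSpace ℂ (Fin n)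

/-- `w₀(x,t) = −(1/2)∫_{(t−x)/2}^{(t+x)/2} q(s) ds`. -/
noncomputable def w0fun (n : ℕ) (q : ℝ → MatC n) (x t : ℝ) : MatC n :=
  -((1 / 2 : ℂ) • ∫ s in ((t - x) / 2)..((t + x) / 2), q s)


open Filter Topology Metric
open scoped ContDiff

variable {E : Type*} [NormedAddCommGroup E] [NormedSpace ℝ E] [CompleteSpace E]

lemma ae_hasDerivAt_primitive (g : ℝ → E) (hg : LocallyIntegrable g volume) :
    ∀ᵐ x ∂(volume : Measure ℝ), HasDerivAt (fun u => ∫ σ in (0:ℝ)..u, g σ) (g x) x := by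
  filter_upwards [(Besicovitch.vitaliFamily (volume : Measure ℝ)).ae_tendsto_average_norm_sub hg]
    with x hx
  rw [hasDerivAt_iff_tendsto_slope]
  have hdlt : Tendsto (fun y : ℝ => |y - x|) (𝓝[≠] x) (𝓝[>] 0) := by
    apply tendsto_nhdsWithin_iff.2
    constructor
    · have : Tendsto (fun y : ℝ => |y - x|) (𝓝 x) (𝓝 |x - x|) :=
        ((continuous_id.sub continuous_const).abs).tendsto x
      simpa using this.mono_left nhdsWithin_le_nhds
    · filter_upwards [self_mem_nhdsWithin] with y hy
      simpa [sub_eq_zero, abs_pos] using sub_ne_zero.2 hy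
  have key : Tendsto (fun y : ℝ => ⨍ u in Metric.closedBall x |y - x|, ‖g u - g x‖)
      (𝓝[≠] x) (𝓝 0) :=
    (hx.comp (Besicovitch.tendsto_filterAt volume x)).comp hdlt
  have hbound : ∀ᶠ y in 𝓝[≠] x, ‖slope (fun u => ∫ σ in (0:ℝ)..u, g σ) x y - g x‖
      ≤ 2 * ⨍ u in Metric.closedBall x |y - x|, ‖g u - g x‖ := by
    filter_upwards [self_mem_nhdsWithin] with y hy
    have hyx : y - x ≠ 0 := sub_ne_zero.2 hy
    have hii : ∀ a b : ℝ, IntervalIntegrable g volume a b := fun a b =>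
      (hg.integrableOn_isCompact isCompact_uIcc).intervalIntegrable
    have hint : (∫ σ in (0:ℝ)..y, g σ) - ∫ σ in (0:ℝ)..x, g σ = ∫ σ in x..y, g σ :=
      intervalIntegral.integral_interval_sub_left (hii 0 y) (hii 0 x)
    have hslope : slope (fun u => ∫ σ in (0:ℝ)..u, g σ) x y
        = (y - x)⁻¹ • ∫ σ in x..y, g σ := by
      rw [slope_def_module, hint]
    have hsub : (∫ σ in x..y, g σ) - (y - x) • g x = ∫ σ in x..y, (g σ - g x) := by
      rw [intervalIntegral.integral_sub (hii x y) intervalIntegrable_const,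
        intervalIntegral.integral_const]
    have h1 : ‖∫ σ in x..y, (g σ - g x)‖ ≤ ∫ u in Metric.closedBall x |y - x|, ‖g u - g x‖ := by
      refine (intervalIntegral.norm_integral_le_integral_norm_uIoc).trans ?_
      apply setIntegral_mono_set
      · exact ((hg.integrableOn_isCompact (isCompact_closedBall x _)).sub
          (integrableOn_const measure_closedBall_lt_top.ne)).norm
      · filter_upwards with u using norm_nonneg _
      · apply HasSubset.Subset.eventuallyLE
        intro u hu
        have habs : |u - x| ≤ |y - x| := by
          rcases le_total x y with h' | h'
          · rw [uIoc_of_le h'] at hu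
            rw [abs_of_nonneg (by linarith [hu.1.le] : (0:ℝ) ≤ u - x),
              abs_of_nonneg (by linarith : (0:ℝ) ≤ y - x)]
            linarith [hu.2]
          · rw [uIoc_of_ge h'] at hu
            rw [abs_of_nonpos (by linarith [hu.2] : u - x ≤ 0),
              abs_of_nonpos (by linarith : y - x ≤ 0)]
            linarith [hu.1.le]
        simpa [Metric.mem_closedBall, Real.dist_eq] using habs
    have hpos : (0:ℝ) < |y - x| := abs_pos.2 hyx
    have hvol : (volume (Metric.closedBall x |y - x|)).toReal = 2 * |y - x| := by
      rw [Real.volume_closedBall, ENNReal.toReal_ofReal (by positivity)]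
    rw [hslope]
    have heq : (y - x)⁻¹ • (∫ σ in x..y, g σ) - g x
        = (y - x)⁻¹ • ((∫ σ in x..y, g σ) - (y - x) • g x) := by
      rw [smul_sub, smul_smul, inv_mul_cancel₀ hyx, one_smul]
    rw [heq, hsub, norm_smul, norm_inv, Real.norm_eq_abs, setAverage_eq, measureReal_def, hvol, smul_eq_mul]
    calc |y - x|⁻¹ * ‖∫ σ in x..y, (g σ - g x)‖
        ≤ |y - x|⁻¹ * ∫ u in Metric.closedBall x |y - x|, ‖g u - g x‖ :=
          mul_le_mul_of_nonneg_left h1 (by positivity)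
      _ = 2 * ((2 * |y - x|)⁻¹ * ∫ u in Metric.closedBall x |y - x|, ‖g u - g x‖) := by
          rw [mul_inv]
          field_simp
  have : Tendsto (fun y => 2 * ⨍ u in Metric.closedBall x |y - x|, ‖g u - g x‖) (𝓝[≠] x) (𝓝 0) := by
    simpa using key.const_mul 2
  have hnorm : Tendsto (fun y => ‖slope (fun u => ∫ σ in (0:ℝ)..u, g σ) x y - g x‖) (𝓝[≠] x) (𝓝 0) :=
    squeeze_zero' (by filter_upwards with y using norm_nonneg _) hbound this
  rw [← tendsto_sub_nhds_zero_iff]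
  exact (tendsto_zero_iff_norm_tendsto_zero).2 hnorm

lemma hasDerivAt_movEnd (g : ℝ → ℝ → E) (hg : Continuous fun p : ℝ × ℝ => g p.1 p.2) (x : ℝ) :
    HasDerivAt (fun y => ∫ σ in x..y, g y σ) (g x x) x := by
  rw [hasDerivAt_iff_isLittleO, Asymptotics.isLittleO_iff]
  intro c hc
  obtain ⟨δ, hδ, hball⟩ := Metric.continuousAt_iff.1 (hg.continuousAt (x := (x, x))) c hc
  filter_upwards [Metric.ball_mem_nhds x hδ] with y hy
  have hy' : |y - x| < δ := by simpa [Real.dist_eq] using hy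
  simp only [intervalIntegral.integral_same, sub_zero]
  have hmem : ∀ σ ∈ Set.uIoc x y, ‖g y σ - g x x‖ ≤ c := by
    intro σ hσ
    have habs : |σ - x| ≤ |y - x| := by
      rcases le_total x y with h' | h'
      · rw [uIoc_of_le h'] at hσ
        rw [abs_of_nonneg (by linarith [hσ.1.le] : (0:ℝ) ≤ σ - x),
          abs_of_nonneg (by linarith : (0:ℝ) ≤ y - x)]
        linarith [hσ.2]
      · rw [uIoc_of_ge h'] at hσ
        rw [abs_of_nonpos (by linarith [hσ.2] : σ - x ≤ 0),
          abs_of_nonpos (by linarith : y - x ≤ 0)]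
        linarith [hσ.1.le]
    have : dist (y, σ) (x, x) < δ := by
      rw [Prod.dist_eq]
      simp only [Real.dist_eq]
      exact max_lt hy' (lt_of_le_of_lt habs hy')
    have := hball this
    rw [dist_eq_norm] at this
    exact this.le
  have hint : (∫ σ in x..y, g y σ) - (y - x) • g x x = ∫ σ in x..y, (g y σ - g x x) := by
    have hcont : Continuous fun σ => g y σ := hg.comp (continuous_const.prodMk continuous_id)
    rw [intervalIntegral.integral_sub (hcont.intervalIntegrable x y)
      intervalIntegrable_const, intervalIntegral.integral_const]
  rw [hint]
  calc ‖∫ σ in x..y, (g y σ - g x x)‖ ≤ c * |y - x| :=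
        intervalIntegral.norm_integral_le_of_norm_le_const hmem
    _ = c * ‖y - x‖ := by rw [Real.norm_eq_abs]

lemma hasDerivAt_paramFixed (g g' : ℝ → ℝ → E)
    (hg : Continuous fun p : ℝ × ℝ => g p.1 p.2)
    (hg' : Continuous fun p : ℝ × ℝ => g' p.1 p.2)
    (hd : ∀ y σ, HasDerivAt (fun z => g z σ) (g' y σ) y) (a b x : ℝ) :
    HasDerivAt (fun y => ∫ σ in a..b, g y σ) (∫ σ in a..b, g' x σ) x := by
  have hco : ∀ y, Continuous fun σ => g y σ := fun y =>
    hg.comp (continuous_const.prodMk continuous_id)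
  have hco' : ∀ y, Continuous fun σ => g' y σ := fun y =>
    hg'.comp (continuous_const.prodMk continuous_id)
  obtain ⟨C, hC⟩ := (((isCompact_closedBall x 1).prod isCompact_uIcc).image_of_continuousOn
    hg'.continuousOn).isBounded.exists_norm_le
  have key := intervalIntegral.hasDerivAt_integral_of_dominated_loc_of_deriv_le
    (F := g) (F' := g') (x₀ := x) (a := a) (b := b) (μ := volume)
    (bound := fun _ => C) (Metric.ball_mem_nhds x one_pos)
    (Eventually.of_forall fun y => ((hco y).aestronglyMeasurable))
    ((hco x).intervalIntegrable a b)
    ((hco' x).aestronglyMeasurable)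
    ?_ intervalIntegrable_const ?_
  · exact key.2
  · filter_upwards with σ hσ y hy
    exact hC _ ⟨(y, σ), ⟨Metric.ball_subset_closedBall hy, uIoc_subset_uIcc hσ⟩, rfl⟩
  · filter_upwards with σ _ y _
    exact hd y σ


variable {n : ℕ}

lemma hasDerivAt_inner_plus (Fc : ℝ → MatC n) (ψ : ℝ → EuclideanSpace ℂ (Fin n))
    (hψ : ContDiff ℝ ∞ ψ) (σ y : ℝ) :
    HasDerivAt (fun z => Fc σ (ψ (2*σ + z))) (Fc σ (deriv ψ (2*σ + y))) y := by
  have h1 : HasDerivAt (fun z : ℝ => 2*σ + z) 1 y := (hasDerivAt_id y).const_add _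
  have h2 : HasDerivAt ψ (deriv ψ (2*σ + y)) (2*σ + y) :=
    ((hψ.differentiable (by simp)) _).hasDerivAt
  have h3 : HasDerivAt (fun z => ψ (2*σ + z)) ((1:ℝ) • deriv ψ (2*σ + y)) y :=
    h2.scomp y h1
  have h4 := (((Fc σ).restrictScalars ℝ).hasFDerivAt).comp_hasDerivAt y h3
  simp at h4; exact h4

lemma hasDerivAt_inner_minus (Fc : ℝ → MatC n) (ψ : ℝ → EuclideanSpace ℂ (Fin n))
    (hψ : ContDiff ℝ ∞ ψ) (σ y : ℝ) :
    HasDerivAt (fun z => Fc σ (ψ (2*σ - z))) (-(Fc σ (deriv ψ (2*σ - y)))) y := by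
  have h1 : HasDerivAt (fun z : ℝ => 2*σ - z) (-1) y := by
    have h := (hasDerivAt_const y (2*σ)).sub (hasDerivAt_id y); simp at h; exact h
  have h2 : HasDerivAt ψ (deriv ψ (2*σ - y)) (2*σ - y) :=
    ((hψ.differentiable (by simp)) _).hasDerivAt
  have h3 : HasDerivAt (fun z => ψ (2*σ - z)) ((-1:ℝ) • deriv ψ (2*σ - y)) y :=
    h2.scomp y h1
  have h4 := (((Fc σ).restrictScalars ℝ).hasFDerivAt).comp_hasDerivAt y h3
  simp at h4; exact h4

lemma hasDerivAt_paramPlus (Fc : ℝ → MatC n) (hFc : Continuous Fc)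
    (ψ : ℝ → EuclideanSpace ℂ (Fin n)) (hψ : ContDiff ℝ ∞ ψ) (a b x : ℝ) :
    HasDerivAt (fun y => ∫ σ in a..b, Fc σ (ψ (2*σ + y)))
      (∫ σ in a..b, Fc σ (deriv ψ (2*σ + x))) x := by
  exact hasDerivAt_paramFixed (fun y σ => Fc σ (ψ (2*σ + y)))
    (fun y σ => Fc σ (deriv ψ (2*σ + y)))
    ((hFc.comp continuous_snd).clm_apply (hψ.continuous.comp (by fun_prop)))
    ((hFc.comp continuous_snd).clm_apply ((hψ.continuous_deriv (by exact_mod_cast le_top)).comp (by fun_prop)))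
    (fun y σ => hasDerivAt_inner_plus Fc ψ hψ σ y) a b x

lemma hasDerivAt_paramMov (Fc : ℝ → MatC n) (hFc : Continuous Fc)
    (ψ : ℝ → EuclideanSpace ℂ (Fin n)) (hψ : ContDiff ℝ ∞ ψ) (t x : ℝ) :
    HasDerivAt (fun y => ∫ σ in y..t, Fc σ (ψ (2*σ - y)))
      (-(Fc x (ψ x)) - ∫ σ in x..t, Fc σ (deriv ψ (2*σ - x))) x := by
  have hgc : Continuous fun p : ℝ × ℝ => Fc p.2 (ψ (2*p.2 - p.1)) :=
    (hFc.comp continuous_snd).clm_apply (hψ.continuous.comp (by fun_prop))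
  have hii : ∀ y a b : ℝ, IntervalIntegrable (fun σ => Fc σ (ψ (2*σ - y))) volume a b :=
    fun y a b => ((hgc.comp (continuous_const.prodMk continuous_id :
      Continuous fun σ : ℝ => ((y, σ) : ℝ × ℝ))).intervalIntegrable a b)
  have heq : (fun y => ∫ σ in y..t, Fc σ (ψ (2*σ - y)))
      = fun y => (∫ σ in x..t, Fc σ (ψ (2*σ - y))) - ∫ σ in x..y, Fc σ (ψ (2*σ - y)) := by
    funext y
    have := intervalIntegral.integral_add_adjacent_intervals (hii y y x) (hii y x t)
    rw [← this, intervalIntegral.integral_symm x y]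
    abel
  rw [heq]
  have h1 : HasDerivAt (fun y => ∫ σ in x..t, Fc σ (ψ (2*σ - y)))
      (∫ σ in x..t, -(Fc σ (deriv ψ (2*σ - x)))) x := by
    exact hasDerivAt_paramFixed (fun y σ => Fc σ (ψ (2*σ - y)))
      (fun y σ => -(Fc σ (deriv ψ (2*σ - y)))) hgc
      (((hFc.comp continuous_snd).clm_apply
        ((hψ.continuous_deriv (by exact_mod_cast le_top)).comp (by fun_prop))).neg)
      (fun y σ => hasDerivAt_inner_minus Fc ψ hψ σ y) x t x
  have h2 : HasDerivAt (fun y => ∫ σ in x..y, Fc σ (ψ (2*σ - y)))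
      (Fc x (ψ x)) x := by
    have := hasDerivAt_movEnd (fun y σ => Fc σ (ψ (2*σ - y))) hgc x
    rw [show 2*x - x = x by ring] at this
    exact this
  have h3 := h1.sub h2
  rw [intervalIntegral.integral_neg] at h3
  refine h3.congr_deriv ?_
  abel

lemma substLemma (q' : ℝ → MatC n) (hq' : LocallyIntegrable q' volume)
    (ψ : ℝ → EuclideanSpace ℂ (Fin n)) (hψc : Continuous ψ)
    (t ε x : ℝ) (hε : 0 < ε) (hx : x ∈ Ioo 0 t)
    (hψ0 : ∀ s, t - ε ≤ s → ψ s = 0) :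
    (∫ s in x..t, (-((1/2 : ℂ) • ∫ σ in ((s-x)/2)..((s+x)/2), q' σ)) (ψ s))
      = -(∫ σ in x..t, (∫ u in (0:ℝ)..σ, q' u) (ψ (2*σ - x)))
        + ∫ σ in (0:ℝ)..t, (∫ u in (0:ℝ)..σ, q' u) (ψ (2*σ + x)) := by
  obtain ⟨hx0, hxt⟩ := hx
  set Fc : ℝ → MatC n := fun u => ∫ v in (0:ℝ)..u, q' v with hFc
  have hii : ∀ a b : ℝ, IntervalIntegrable q' volume a b := fun a b =>
    (hq'.integrableOn_isCompact isCompact_uIcc).intervalIntegrable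
  have hFcC : Continuous Fc := intervalIntegral.continuous_primitive hii 0
  set h : ℝ → EuclideanSpace ℂ (Fin n) := fun u => Fc u (ψ (2*u - x)) with hh
  set k : ℝ → EuclideanSpace ℂ (Fin n) := fun v => Fc v (ψ (2*v + x)) with hk
  have hhC : Continuous h := hFcC.clm_apply (hψc.comp (by fun_prop))
  have hkC : Continuous k := hFcC.clm_apply (hψc.comp (by fun_prop))
  -- step 1 : rewrite integrand
  have step1 : (∫ s in x..t, (-((1/2 : ℂ) • ∫ σ in ((s-x)/2)..((s+x)/2), q' σ)) (ψ s))
      = -((1/2 : ℂ) • ((∫ s in x..t, Fc ((s+x)/2) (ψ s)) - ∫ s in x..t, Fc ((s-x)/2) (ψ s))) := by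
    have hptw : ∀ s, (-((1/2 : ℂ) • ∫ σ in ((s-x)/2)..((s+x)/2), q' σ)) (ψ s)
        = -((1/2 : ℂ) • (Fc ((s+x)/2) (ψ s) - Fc ((s-x)/2) (ψ s))) := by
      intro s
      have hsplit : Fc ((s+x)/2) - Fc ((s-x)/2) = ∫ σ in ((s-x)/2)..((s+x)/2), q' σ :=
        intervalIntegral.integral_interval_sub_left (hii 0 _) (hii 0 _)
      rw [← hsplit]
      simp [ContinuousLinearMap.sub_apply]
    have hc1 : Continuous fun s : ℝ => Fc ((s+x)/2) (ψ s) :=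
      (hFcC.comp (by fun_prop)).clm_apply hψc
    have hc2 : Continuous fun s : ℝ => Fc ((s-x)/2) (ψ s) :=
      (hFcC.comp (by fun_prop)).clm_apply hψc
    simp_rw [hptw]
    rw [intervalIntegral.integral_neg, intervalIntegral.integral_smul,
      intervalIntegral.integral_sub (hc1.intervalIntegrable x t) (hc2.intervalIntegrable x t)]
  -- plus term
  have plus1 : (∫ s in x..t, Fc ((s+x)/2) (ψ s)) = (2:ℝ) • ∫ u in x..t, h u := by
    have hcongr : ∀ s, Fc ((s+x)/2) (ψ s) = h ((1/2)*s + x/2) := by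
      intro s
      have e1 : (1/2)*s + x/2 = (s+x)/2 := by ring
      have e2 : 2*((1/2)*s + x/2) - x = s := by ring
      have hr : h ((1/2)*s + x/2) = Fc ((1/2)*s + x/2) (ψ (2*((1/2)*s + x/2) - x)) := rfl
      rw [hr, e2, e1]
    have : (∫ s in x..t, Fc ((s+x)/2) (ψ s)) = ∫ s in x..t, h ((1/2)*s + x/2) :=
      intervalIntegral.integral_congr (fun s _ => hcongr s)
    rw [this, intervalIntegral.integral_comp_mul_add h (by norm_num : (1/2:ℝ) ≠ 0) (x/2)]
    rw [show (1/2:ℝ)*x + x/2 = x by ring, show (1/2:ℝ)*t + x/2 = (t+x)/2 by ring,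
      show ((1/2:ℝ))⁻¹ = (2:ℝ) by norm_num]
    congr 1
    have hzero : ∫ u in ((t+x)/2)..t, h u = 0 := by
      have heqz : EqOn h (fun _ => (0 : EuclideanSpace ℂ (Fin n))) (uIcc ((t+x)/2) t) := by
        intro u hu
        rw [uIcc_of_le (by linarith : (t+x)/2 ≤ t)] at hu
        have hle : t - ε ≤ 2*u - x := by linarith [hu.1]
        simp [hh, hψ0 _ hle]
      rw [intervalIntegral.integral_congr heqz, intervalIntegral.integral_zero]
    have := intervalIntegral.integral_add_adjacent_intervals (μ := volume)
      (hhC.intervalIntegrable x ((t+x)/2)) (hhC.intervalIntegrable ((t+x)/2) t)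
    rw [hzero, add_zero] at this
    exact this
  -- minus term
  have minus1 : (∫ s in x..t, Fc ((s-x)/2) (ψ s)) = (2:ℝ) • ∫ v in (0:ℝ)..t, k v := by
    have hcongr : ∀ s, Fc ((s-x)/2) (ψ s) = k ((1/2)*s + (-x/2)) := by
      intro s
      have e1 : (1/2)*s + (-x/2) = (s-x)/2 := by ring
      have e2 : 2*((1/2)*s + (-x/2)) + x = s := by ring
      have hr : k ((1/2)*s + (-x/2)) = Fc ((1/2)*s + (-x/2)) (ψ (2*((1/2)*s + (-x/2)) + x)) := rfl
      rw [hr, e2, e1]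
    have : (∫ s in x..t, Fc ((s-x)/2) (ψ s)) = ∫ s in x..t, k ((1/2)*s + (-x/2)) :=
      intervalIntegral.integral_congr (fun s _ => hcongr s)
    rw [this, intervalIntegral.integral_comp_mul_add k (by norm_num : (1/2:ℝ) ≠ 0) (-x/2)]
    rw [show (1/2:ℝ)*x + -x/2 = 0 by ring, show (1/2:ℝ)*t + -x/2 = (t-x)/2 by ring,
      show ((1/2:ℝ))⁻¹ = (2:ℝ) by norm_num]
    congr 1
    have hzero : ∫ v in ((t-x)/2)..t, k v = 0 := by
      have heqz : EqOn k (fun _ => (0 : EuclideanSpace ℂ (Fin n))) (uIcc ((t-x)/2) t) := by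
        intro v hv
        rw [uIcc_of_le (by linarith : (t-x)/2 ≤ t)] at hv
        have hle : t - ε ≤ 2*v + x := by linarith [hv.1]
        simp [hk, hψ0 _ hle]
      rw [intervalIntegral.integral_congr heqz, intervalIntegral.integral_zero]
    have := intervalIntegral.integral_add_adjacent_intervals (μ := volume)
      (hkC.intervalIntegrable 0 ((t-x)/2)) (hkC.intervalIntegrable ((t-x)/2) t)
    rw [hzero, add_zero] at this
    exact this
  rw [step1, plus1, minus1]
  have hA : ((2:ℝ) • ∫ u in x..t, h u) = (2:ℂ) • ∫ u in x..t, h u := by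
    norm_num [← Complex.coe_smul]
  have hB : ((2:ℝ) • ∫ v in (0:ℝ)..t, k v) = (2:ℂ) • ∫ v in (0:ℝ)..t, k v := by
    norm_num [← Complex.coe_smul]
  rw [hA, hB, smul_sub, smul_smul, smul_smul]
  norm_num
  abel

lemma locInt_indicator (q : ℝ → MatC n) (hq : LocallyIntegrableOn q (Ici (0:ℝ)) volume) :
    LocallyIntegrable ((Ici (0:ℝ)).indicator q) volume := by
  intro x
  refine ⟨Icc (x-1) (x+1), Icc_mem_nhds (by linarith) (by linarith), ?_⟩
  rw [IntegrableOn]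
  refine (integrable_indicator_iff (f := q) (measurableSet_Ici (a := (0:ℝ)))).2 ?_
  rw [IntegrableOn, Measure.restrict_restrict measurableSet_Ici]
  have h1 : IntegrableOn q (Icc 0 (max 0 (x+1))) volume :=
    hq.integrableOn_compact_subset (fun u hu => hu.1) isCompact_Icc
  exact h1.mono_set fun u hu => ⟨hu.1, le_max_of_le_right hu.2.2⟩

lemma deriv_zero_on_Iic {E' : Type*} [NormedAddCommGroup E'] [NormedSpace ℝ E']
    (f : ℝ → E') (hf : ContDiff ℝ ∞ f) (ε : ℝ) (h0 : ∀ s ≤ ε, f s = 0) :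
    ∀ s ≤ ε, deriv f s = 0 := by
  have hlt : ∀ s < ε, deriv f s = 0 := by
    intro s hs
    have heq : f =ᶠ[nhds s] (fun _ => 0) := by
      filter_upwards [Iio_mem_nhds hs] with u hu using h0 u hu.le
    rw [heq.deriv_eq]
    exact deriv_const _ _
  intro s hs
  rcases lt_or_eq_of_le hs with h | h
  · exact hlt s h
  · subst h
    have h1 : Tendsto (deriv f) (𝓝[<] s) (𝓝 (deriv f s)) :=
      ((hf.continuous_deriv (by exact_mod_cast le_top)).tendsto s).mono_left nhdsWithin_le_nhds
    have h2 : Tendsto (deriv f) (𝓝[<] s) (𝓝 0) := by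
      apply tendsto_const_nhds.congr'
      filter_upwards [self_mem_nhdsWithin] with u hu
      exact (hlt u hu).symm
    exact tendsto_nhds_unique h1 h2


/-- For a smooth control `f` vanishing near `0` (extended by zero)
and `q ∈ L¹_loc([0,∞))`, for every `t ≥ 0` and a.e. `x ∈ (0,t)`:
`∫ₓᵗ w₀(x,s) f''(t−s) ds − ∂²ₓ[∫ₓᵗ w₀(x,s) f(t−s) ds] = −q(x) f(t−x)`. -/
theorem stmt19 (n : ℕ) (q : ℝ → MatC n)
    (hq : LocallyIntegrableOn q (Ici (0 : ℝ)))
    (f : ℝ → EuclideanSpace ℂ (Fin n)) (hf : ContDiff ℝ (⊤ : ℕ∞) f)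
    (ε : ℝ) (hε : 0 < ε) (hf0 : ∀ s ≤ ε, f s = 0) :
    ∀ t : ℝ, 0 ≤ t →
      ∀ᵐ x ∂(volume.restrict (Ioo (0:ℝ) t)),
        (∫ s in x..t, (w0fun n q x s) (deriv (deriv f) (t - s)))
          - deriv (deriv (fun y => ∫ s in y..t, (w0fun n q y s) (f (t - s)))) x
          = -((q x) (f (t - x))) := by
  intro t ht
  set q' : ℝ → MatC n := (Ici (0:ℝ)).indicator q with hq'def
  have hq'loc : LocallyIntegrable q' volume := locInt_indicator q hq
  have hii : ∀ a b : ℝ, IntervalIntegrable q' volume a b := fun a b =>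
    (hq'loc.integrableOn_isCompact isCompact_uIcc).intervalIntegrable
  set Fc : ℝ → MatC n := fun u => ∫ v in (0:ℝ)..u, q' v with hFcdef
  have hFcC : Continuous Fc := intervalIntegral.continuous_primitive hii 0
  set φ : ℝ → EuclideanSpace ℂ (Fin n) := fun s => f (t - s) with hφdef
  have hf' : ContDiff ℝ ∞ f := hf.of_le (by simp)
  have hφ : ContDiff ℝ ∞ φ := hf'.comp (contDiff_const.sub contDiff_id)
  have hf1 : ContDiff ℝ ∞ (deriv f) := (contDiff_infty_iff_deriv.mp hf').2
  have hφ1 : ContDiff ℝ ∞ (deriv φ) := (contDiff_infty_iff_deriv.mp hφ).2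
  have hφd : deriv φ = fun s => -(deriv f (t - s)) := by
    funext s
    rw [hφdef]
    exact deriv_comp_const_sub f t s
  have hφdd : deriv (deriv φ) = fun s => deriv (deriv f) (t - s) := by
    funext s
    rw [hφd]
    have : deriv (fun s => -(deriv f (t - s))) s = -(deriv (fun s => deriv f (t - s)) s) :=
      deriv.neg
    rw [this, deriv_comp_const_sub (deriv f) t s, neg_neg]
  have hφ0 : ∀ s, t - ε ≤ s → φ s = 0 := fun s hs => hf0 _ (by linarith)
  have hvan2 : ∀ s, t - ε ≤ s → deriv (deriv f) (t - s) = 0 := fun s hs =>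
    deriv_zero_on_Iic (deriv f) hf1 ε (deriv_zero_on_Iic f hf' ε hf0) (t - s) (by linarith)
  have hswitch : ∀ y ∈ Ioo (0:ℝ) t, ∀ ψv : ℝ → EuclideanSpace ℂ (Fin n),
      (∫ s in y..t, (w0fun n q y s) (ψv s))
        = ∫ s in y..t, (-((1 / 2 : ℂ) • ∫ σ in ((s-y)/2)..((s+y)/2), q' σ)) (ψv s) := by
    intro y hy ψv
    apply intervalIntegral.integral_congr
    intro s hs
    rw [uIcc_of_le hy.2.le] at hs
    have hinner : (∫ σ in ((s-y)/2)..((s+y)/2), q σ) = ∫ σ in ((s-y)/2)..((s+y)/2), q' σ := by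
      apply intervalIntegral.integral_congr
      intro σ hσ
      rw [uIcc_of_le (by linarith [hy.1] : (s-y)/2 ≤ (s+y)/2)] at hσ
      have hσ0 : (0:ℝ) ≤ σ := le_trans (by linarith [hs.1, hy.1.le] : (0:ℝ) ≤ (s-y)/2) hσ.1
      exact (indicator_of_mem hσ0 q).symm
    simp only [w0fun]
    rw [hinner]
  set Ghat : ℝ → EuclideanSpace ℂ (Fin n) := fun y =>
    -(∫ σ in y..t, Fc σ (φ (2*σ - y))) + ∫ σ in (0:ℝ)..t, Fc σ (φ (2*σ + y)) with hGhatdef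
  set D : ℝ → EuclideanSpace ℂ (Fin n) := fun y =>
    (Fc y (φ y) + ∫ σ in y..t, Fc σ (deriv φ (2*σ - y)))
      + ∫ σ in (0:ℝ)..t, Fc σ (deriv φ (2*σ + y)) with hDdef
  have hGeq : ∀ y ∈ Ioo (0:ℝ) t,
      (∫ s in y..t, (w0fun n q y s) (f (t - s))) = Ghat y := by
    intro y hy
    have h1 : (∫ s in y..t, (w0fun n q y s) (f (t - s)))
        = ∫ s in y..t, (-((1 / 2 : ℂ) • ∫ σ in ((s-y)/2)..((s+y)/2), q' σ)) (f (t - s)) :=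
      hswitch y hy (fun s => f (t - s))
    have h2 : (∫ s in y..t, (-((1 / 2 : ℂ) • ∫ σ in ((s-y)/2)..((s+y)/2), q' σ)) (f (t - s)))
        = -(∫ σ in y..t, Fc σ (φ (2*σ - y))) + ∫ σ in (0:ℝ)..t, Fc σ (φ (2*σ + y)) :=
      substLemma q' hq'loc φ hφ.continuous t ε y hε hy hφ0
    rw [h1, h2, hGhatdef]
  have hD : ∀ y, HasDerivAt Ghat (D y) y := by
    intro y
    have h1 := (hasDerivAt_paramMov Fc hFcC φ hφ t y).neg
    have h2 := hasDerivAt_paramPlus Fc hFcC φ hφ 0 t y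
    have h3 : HasDerivAt Ghat
        (-(-(Fc y (φ y)) - ∫ σ in y..t, Fc σ (deriv φ (2*σ - y)))
          + ∫ σ in (0:ℝ)..t, Fc σ (deriv φ (2*σ + y))) y := h1.add h2
    have habel : ∀ (a A B : EuclideanSpace ℂ (Fin n)), -(-a - A) + B = (a + A) + B :=
      fun a A B => by abel
    rw [habel] at h3
    exact h3
  filter_upwards [ae_restrict_mem measurableSet_Ioo,
    ae_restrict_of_ae (ae_hasDerivAt_primitive q' hq'loc)] with x hx hFd
  have hI1 : (∫ s in x..t, (w0fun n q x s) (deriv (deriv f) (t - s)))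
      = -(∫ σ in x..t, Fc σ (deriv (deriv f) (t - (2*σ - x))))
        + ∫ σ in (0:ℝ)..t, Fc σ (deriv (deriv f) (t - (2*σ + x))) := by
    have h1 := hswitch x hx (fun s => deriv (deriv f) (t - s))
    have h2 : (∫ s in x..t,
          (-((1 / 2 : ℂ) • ∫ σ in ((s-x)/2)..((s+x)/2), q' σ)) (deriv (deriv f) (t - s)))
        = -(∫ σ in x..t, Fc σ (deriv (deriv f) (t - (2*σ - x))))
          + ∫ σ in (0:ℝ)..t, Fc σ (deriv (deriv f) (t - (2*σ + x))) :=
      substLemma q' hq'loc (fun s => deriv (deriv f) (t - s))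
        (((contDiff_infty_iff_deriv.mp hf1).2.continuous).comp
          (continuous_const.sub continuous_id)) t ε x hε hx (fun s hs => hvan2 s hs)
    rw [h1, h2]
  -- second derivative of G
  have hGderiv : (deriv (fun y => ∫ s in y..t, (w0fun n q y s) (f (t - s)))) =ᶠ[nhds x] D := by
    filter_upwards [Ioo_mem_nhds hx.1 hx.2] with y hy
    have hGy : (fun y => ∫ s in y..t, (w0fun n q y s) (f (t - s))) =ᶠ[nhds y] Ghat := by
      filter_upwards [Ioo_mem_nhds hy.1 hy.2] with z hz using hGeq z hz
    rw [hGy.deriv_eq]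
    exact (hD y).deriv
  have hφdAt : HasDerivAt φ (deriv φ x) x := ((hφ.differentiable (by simp)) x).hasDerivAt
  have hRS : HasDerivAt (fun y => (Fc y).restrictScalars ℝ) ((q' x).restrictScalars ℝ) x :=
    (ContinuousLinearMap.restrictScalarsL ℂ (EuclideanSpace ℂ (Fin n))
      (EuclideanSpace ℂ (Fin n)) ℝ ℝ).hasFDerivAt.comp_hasDerivAt x hFd
  have hd1 : HasDerivAt (fun y => Fc y (φ y)) ((q' x) (φ x) + Fc x (deriv φ x)) x :=
    hRS.clm_apply hφdAt
  have hd2 := hasDerivAt_paramMov Fc hFcC (deriv φ) hφ1 t x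
  have hd3 := hasDerivAt_paramPlus Fc hFcC (deriv φ) hφ1 0 t x
  have hDat : HasDerivAt D
      ((((q' x) (φ x) + Fc x (deriv φ x))
          + (-(Fc x (deriv φ x)) - ∫ σ in x..t, Fc σ (deriv (deriv φ) (2*σ - x))))
        + ∫ σ in (0:ℝ)..t, Fc σ (deriv (deriv φ) (2*σ + x))) x := (hd1.add hd2).add hd3
  have hsecond : deriv (deriv (fun y => ∫ s in y..t, (w0fun n q y s) (f (t - s)))) x
      = (((q' x) (φ x) + Fc x (deriv φ x))
          + (-(Fc x (deriv φ x)) - ∫ σ in x..t, Fc σ (deriv (deriv φ) (2*σ - x))))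
        + ∫ σ in (0:ℝ)..t, Fc σ (deriv (deriv φ) (2*σ + x)) := by
    rw [hGderiv.deriv_eq]
    exact hDat.deriv
  rw [hI1, hsecond]
  simp_rw [hφdd]
  have hqq : q' x = q x := indicator_of_mem hx.1.le q
  have hφx : φ x = f (t - x) := rfl
  rw [hqq, hφx]
  have habel2 : ∀ (P Q a b : EuclideanSpace ℂ (Fin n)),
      (-P + Q) - ((a + b + (-b - P)) + Q) = -a := fun P Q a b => by abel
  exact habel2 _ _ _ _
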